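/- Calderón–Zygmund decomposition on an interval: let J = [a,b] with a < b and let h : ℝ → ℝ be integrable on J with (1/|J|) ∫_J |h(y)| dy ≤ 1. Then there exist a measurable set E ⊆ J and a countable family {J_i} of pairwise disjoint subintervals of J such that (i) |E| ≥ |J|/2; (ii) |h(x)| ≤ 2 for almost every x ∈ E; (iii) the union of the J_i coincides with J \ E up to a set of Lebesgue measure zero; and (iv) (1/|J_i|) ∫_{J_i} |h(y)| dy ≤ 4 for every i. -/

import Mathlib

/-!
Stop at the maximal dyadic subintervals of `[a, b)` on which the average of `|h|` exceeds `2`.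
None of them is `[a, b)` itself, so each has a parent with average at most `2`, and halving an
interval at most doubles the average: hence the bound `4`. Being disjoint with averages above `2`,
their total length is at most `½ ∫_J |h| ≤ |J| / 2`. A point of `J` outside all of them lies only
in dyadic intervals with average at most `2`, and these shrink to it, so `|h| ≤ 2` there at every
Lebesgue point.
-/

open MeasureTheory Set Filter Topology
open scoped ENNReal

/-- `I` is a bounded interval of positive length in `ℝ`. -/
def IsBddInterval (I : Set ℝ) : Prop :=
  ∃ a b : ℝ, a < b ∧ Set.Ioo a b ⊆ I ∧ I ⊆ Set.Icc a b

theorem setAverage_eq_div {α : Type*} [MeasurableSpace α] (μ : Measure α) (f : α → ℝ)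
    (s : Set α) : ⨍ x in s, f x ∂μ = (∫ x in s, f x ∂μ) / (μ s).toReal := by
  rw [setAverage_eq, smul_eq_mul, inv_mul_eq_div, measureReal_def]

theorem mul_measure_biUnion_le_lintegral {α ι : Type*} [MeasurableSpace α] {μ : Measure α}
    {S : Set ι} (hS : S.Countable) {s : ι → Set α} (hd : S.PairwiseDisjoint s)
    (hm : ∀ i ∈ S, MeasurableSet (s i)) {f : α → ℝ≥0∞} {c : ℝ≥0∞}
    (hc : ∀ i ∈ S, c * μ (s i) ≤ ∫⁻ x in s i, f x ∂μ) :
    c * μ (⋃ i ∈ S, s i) ≤ ∫⁻ x in ⋃ i ∈ S, s i, f x ∂μ := by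
  rw [measure_biUnion hS hd hm, lintegral_biUnion hS hm hd, ← ENNReal.tsum_mul_left]
  exact ENNReal.tsum_le_tsum fun i => hc i i.2

theorem ae_tendsto_setAverage_Icc {ι : Type*} {l : Filter ι} {f : ℝ → ℝ}
    (hf : LocallyIntegrable f) :
    ∀ᵐ x, ∀ c r : ι → ℝ, Tendsto r l (𝓝[>] 0) → (∀ i, x ∈ Icc (c i) (c i + r i)) →
      Tendsto (fun i => ⨍ y in Icc (c i) (c i + r i), f y) l (𝓝 (f x)) := by
  filter_upwards [IsUnifLocDoublingMeasure.ae_tendsto_average (μ := volume) hf 1]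
    with x hx c r hr hxr
  have hball : ∀ i, Metric.closedBall (c i + r i / 2) (r i / 2) = Icc (c i) (c i + r i) := by
    intro i
    rw [Real.closedBall_eq_Icc]
    congr 1 <;> ring
  have hhalf : Tendsto (fun i => r i / 2) l (𝓝[>] 0) := by
    obtain ⟨hr₀, hpos⟩ := tendsto_nhdsWithin_iff.1 hr
    exact tendsto_nhdsWithin_iff.2
      ⟨by simpa using hr₀.div_const 2, hpos.mono fun i (hi : 0 < r i) => half_pos hi⟩
  simp_rw [← hball]
  exact hx _ _ hhalf (Eventually.of_forall fun i => by rw [one_mul, hball]; exact hxr i)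

namespace CalderonZygmund

section Dyadic

variable {a b x : ℝ} {n m k k' : ℕ}

noncomputable def dyadicLength (a b : ℝ) (n : ℕ) : ℝ := (b - a) / 2 ^ n

def dyadicIco (a b : ℝ) (n k : ℕ) : Set ℝ :=
  Ico (a + k * dyadicLength a b n) (a + (k + 1) * dyadicLength a b n)

theorem dyadicLength_pos (hab : a < b) (n : ℕ) : 0 < dyadicLength a b n :=
  div_pos (sub_pos.2 hab) (by positivity)

theorem dyadicLength_eq_pow_mul (hmn : m ≤ n) :
    dyadicLength a b m = 2 ^ (n - m) * dyadicLength a b n := by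
  rw [dyadicLength, dyadicLength, ← Nat.sub_add_cancel hmn, pow_add]
  field_simp
  rw [Nat.add_sub_cancel]

theorem tendsto_dyadicLength (hab : a < b) : Tendsto (dyadicLength a b) atTop (𝓝[>] 0) := by
  refine tendsto_nhdsWithin_iff.2 ⟨?_, Eventually.of_forall (dyadicLength_pos hab)⟩
  have hpow : dyadicLength a b = fun n => (b - a) * 2⁻¹ ^ n := by
    ext n
    rw [dyadicLength, div_eq_mul_inv, inv_pow]
  simpa [hpow] using
    (tendsto_pow_atTop_nhds_zero_of_lt_one (by norm_num : (0 : ℝ) ≤ 2⁻¹)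
      (by norm_num)).const_mul (b - a)

theorem volume_real_dyadicIco (hab : a ≤ b) :
    volume.real (dyadicIco a b n k) = dyadicLength a b n := by
  have hℓ : 0 ≤ dyadicLength a b n := div_nonneg (sub_nonneg.2 hab) (by positivity)
  rw [dyadicIco, Real.volume_real_Ico_of_le] <;> nlinarith

theorem isBddInterval_dyadicIco (hab : a < b) : IsBddInterval (dyadicIco a b n k) :=
  ⟨_, _, by linarith [dyadicLength_pos hab n], Ioo_subset_Ico_self, Ico_subset_Icc_self⟩

theorem dyadicIco_zero_zero : dyadicIco a b 0 0 = Ico a b := by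
  simp [dyadicIco, dyadicLength]

theorem dyadicIco_subset_Icc (hab : a ≤ b) (hk : k < 2 ^ n) : dyadicIco a b n k ⊆ Icc a b := by
  have hℓ : 0 ≤ dyadicLength a b n := div_nonneg (sub_nonneg.2 hab) (by positivity)
  have hfull : (2 : ℝ) ^ n * dyadicLength a b n = b - a := by
    rw [dyadicLength]
    field_simp
  have hk' : (k : ℝ) + 1 ≤ 2 ^ n := by exact_mod_cast hk
  rintro y ⟨hy₁, hy₂⟩
  constructor <;> nlinarith [(Nat.cast_nonneg k : (0 : ℝ) ≤ k)]

theorem dyadicIco_subset_ancestor (hab : a ≤ b) (hmn : m ≤ n) :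
    dyadicIco a b n k ⊆ dyadicIco a b m (k / 2 ^ (n - m)) := by
  have hℓ : 0 ≤ dyadicLength a b n := div_nonneg (sub_nonneg.2 hab) (by positivity)
  have hlow : ((k / 2 ^ (n - m) : ℕ) : ℝ) * 2 ^ (n - m) ≤ k := by
    exact_mod_cast Nat.div_mul_le_self k (2 ^ (n - m))
  have hup : (k : ℝ) + 1 ≤ (((k / 2 ^ (n - m) : ℕ) : ℝ) + 1) * 2 ^ (n - m) := by
    exact_mod_cast (Nat.lt_div_mul_add (Nat.two_pow_pos _)).trans_eq (by ring)
  rw [dyadicIco, dyadicIco, dyadicLength_eq_pow_mul hmn]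
  rintro y ⟨hy₁, hy₂⟩
  constructor <;> nlinarith

theorem disjoint_dyadicIco (hk : k ≠ k') : Disjoint (dyadicIco a b n k) (dyadicIco a b n k') := by
  simpa [dyadicIco, zsmul_eq_mul, add_mul] using
    pairwise_disjoint_Ico_add_zsmul a (dyadicLength a b n) (by exact_mod_cast hk : (k : ℤ) ≠ k')

theorem exists_mem_dyadicIco (hab : a < b) (hx : x ∈ Ico a b) (n : ℕ) :
    ∃ k < 2 ^ n, x ∈ dyadicIco a b n k := by
  have hℓ := dyadicLength_pos hab n
  have hq : 0 ≤ (x - a) / dyadicLength a b n := div_nonneg (sub_nonneg.2 hx.1) hℓ.le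
  have hq_mul : (x - a) / dyadicLength a b n * dyadicLength a b n = x - a :=
    div_mul_cancel₀ _ hℓ.ne'
  have hq_lt : (x - a) / dyadicLength a b n < 2 ^ n := by
    rw [div_lt_iff₀ hℓ, dyadicLength, mul_div_cancel₀ _ (by positivity)]
    linarith [hx.2]
  refine ⟨⌊(x - a) / dyadicLength a b n⌋₊, (Nat.floor_lt hq).2 (by exact_mod_cast hq_lt), ?_, ?_⟩
  · nlinarith [Nat.floor_le hq]
  · nlinarith [Nat.lt_floor_add_one ((x - a) / dyadicLength a b n)]

end Dyadic

section Stopping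

variable {f : ℝ → ℝ} {t a b x : ℝ} {n n' k k' : ℕ}

/-- `k / 2 ^ (n - m)` indexes the ancestor at level `m` of the `k`-th cell of level `n`. -/
def IsStoppingCell (f : ℝ → ℝ) (t a b : ℝ) (n k : ℕ) : Prop :=
  k < 2 ^ n ∧ t < ⨍ y in dyadicIco a b n k, f y ∧
    ∀ m < n, ⨍ y in dyadicIco a b m (k / 2 ^ (n - m)), f y ≤ t

theorem setAverage_dyadicIco (hab : a ≤ b) :
    ⨍ y in dyadicIco a b n k, f y = (∫ y in dyadicIco a b n k, f y) / dyadicLength a b n := by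
  rw [setAverage_eq_div, ← measureReal_def, volume_real_dyadicIco hab]

theorem IsStoppingCell.disjoint (hab : a ≤ b) (h : IsStoppingCell f t a b n k)
    (h' : IsStoppingCell f t a b n' k') (hne : (n, k) ≠ (n', k')) :
    Disjoint (dyadicIco a b n k) (dyadicIco a b n' k') := by
  wlog hle : n ≤ n' generalizing n k n' k'
  · exact (this h' h hne.symm (le_of_not_ge hle)).symm
  rcases hle.lt_or_eq with hlt | rfl
  · have hanc : k' / 2 ^ (n' - n) ≠ k := fun heq => by
      have := h'.2.2 n hlt
      rw [heq] at this
      exact this.not_gt h.2.1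
    exact (disjoint_dyadicIco hanc.symm).mono_right (dyadicIco_subset_ancestor hab hle)
  · exact disjoint_dyadicIco fun hk => hne (by rw [hk])

theorem pairwiseDisjoint_stoppingCells (hab : a ≤ b) :
    {p : ℕ × ℕ | IsStoppingCell f t a b p.1 p.2}.PairwiseDisjoint
      fun p => dyadicIco a b p.1 p.2 :=
  fun _ hp _ hq hne => hp.disjoint hab hq hne

theorem IsStoppingCell.level_pos (hJ : ⨍ y in Icc a b, f y ≤ t)
    (h : IsStoppingCell f t a b n k) : 0 < n := by
  refine Nat.pos_of_ne_zero fun hn => ?_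
  subst hn
  obtain rfl : k = 0 := Nat.lt_one_iff.1 h.1
  have hgt := h.2.1
  rw [dyadicIco_zero_zero, setAverage_congr Ico_ae_eq_Icc] at hgt
  exact hgt.not_ge hJ

theorem IsStoppingCell.setAverage_le (hab : a < b) (hf₀ : 0 ≤ f)
    (hf : IntegrableOn f (Icc a b)) (hJ : ⨍ y in Icc a b, f y ≤ t)
    (h : IsStoppingCell f t a b n k) : ⨍ y in dyadicIco a b n k, f y ≤ 2 * t := by
  obtain ⟨m, rfl⟩ : ∃ m, n = m + 1 := Nat.exists_eq_succ_of_ne_zero (h.level_pos hJ).ne'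
  have hparent : ⨍ y in dyadicIco a b m (k / 2), f y ≤ t := by
    simpa using h.2.2 m m.lt_succ_self
  have hk : k / 2 < 2 ^ m := by
    have := h.1
    rw [pow_succ] at this
    omega
  have hsub : dyadicIco a b (m + 1) k ⊆ dyadicIco a b m (k / 2) := by
    simpa using dyadicIco_subset_ancestor (k := k) hab.le m.le_succ
  have hmono : ∫ y in dyadicIco a b (m + 1) k, f y ≤ ∫ y in dyadicIco a b m (k / 2), f y :=
    setIntegral_mono_set (hf.mono_set (dyadicIco_subset_Icc hab.le hk)) (ae_of_all _ hf₀)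
      hsub.eventuallyLE
  have hlen : dyadicLength a b m = 2 * dyadicLength a b (m + 1) := by
    simpa using dyadicLength_eq_pow_mul (a := a) (b := b) m.le_succ
  rw [setAverage_dyadicIco hab.le, div_le_iff₀ (dyadicLength_pos hab _)] at hparent ⊢
  rw [hlen] at hparent
  linarith

theorem IsStoppingCell.mul_dyadicLength_lt (hab : a < b) (h : IsStoppingCell f t a b n k) :
    t * dyadicLength a b n < ∫ y in dyadicIco a b n k, f y := by
  have := h.2.1
  rwa [setAverage_dyadicIco hab.le, lt_div_iff₀ (dyadicLength_pos hab n)] at this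

theorem mul_volume_stoppingUnion_le (hab : a < b) (ht : 0 ≤ t) (hf₀ : 0 ≤ f)
    (hf : IntegrableOn f (Icc a b)) :
    t * volume.real (⋃ p ∈ {p : ℕ × ℕ | IsStoppingCell f t a b p.1 p.2}, dyadicIco a b p.1 p.2)
      ≤ ∫ y in Icc a b, f y := by
  set P := {p : ℕ × ℕ | IsStoppingCell f t a b p.1 p.2}
  set U := ⋃ p ∈ P, dyadicIco a b p.1 p.2
  have hU : U ⊆ Icc a b := iUnion₂_subset fun p hp => dyadicIco_subset_Icc hab.le hp.1
  have hcell : ∀ p ∈ P, ENNReal.ofReal t * volume (dyadicIco a b p.1 p.2)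
      ≤ ∫⁻ y in dyadicIco a b p.1 p.2, ENNReal.ofReal (f y) := by
    intro p hp
    have hfin : volume (dyadicIco a b p.1 p.2) ≠ ⊤ := measure_Ico_lt_top.ne
    rw [← ofReal_integral_eq_lintegral_ofReal (hf.mono_set (dyadicIco_subset_Icc hab.le hp.1))
      (ae_of_all _ hf₀), ← ofReal_measureReal hfin, volume_real_dyadicIco hab.le,
      ← ENNReal.ofReal_mul ht]
    exact ENNReal.ofReal_le_ofReal (hp.mul_dyadicLength_lt hab).le
  have hUJ : ∫⁻ y in U, ENNReal.ofReal (f y) ≤ ENNReal.ofReal (∫ y in Icc a b, f y) := by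
    rw [ofReal_integral_eq_lintegral_ofReal hf (ae_of_all _ hf₀)]
    exact lintegral_mono_set hU
  calc t * volume.real U = (ENNReal.ofReal t * volume U).toReal := by
        rw [ENNReal.toReal_mul, ENNReal.toReal_ofReal ht, measureReal_def]
    _ ≤ (ENNReal.ofReal (∫ y in Icc a b, f y)).toReal :=
        ENNReal.toReal_mono ENNReal.ofReal_ne_top <|
          (mul_measure_biUnion_le_lintegral P.to_countable (pairwiseDisjoint_stoppingCells hab.le)
            (fun _ _ => measurableSet_Ico) hcell).trans hUJ
    _ = ∫ y in Icc a b, f y :=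
        ENNReal.toReal_ofReal (setIntegral_nonneg measurableSet_Icc fun y _ => hf₀ y)

theorem setAverage_dyadicIco_le_of_forall_notMem (hab : a ≤ b)
    (hx : ∀ n k, IsStoppingCell f t a b n k → x ∉ dyadicIco a b n k) :
    ∀ n, ∀ k < 2 ^ n, x ∈ dyadicIco a b n k → ⨍ y in dyadicIco a b n k, f y ≤ t := by
  intro n
  induction n using Nat.strong_induction_on with
  | _ n ih =>
    intro k hk hxk
    by_contra! hgt
    obtain ⟨m, hmn, hm⟩ : ∃ m < n, t < ⨍ y in dyadicIco a b m (k / 2 ^ (n - m)), f y := by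
      by_contra! hanc
      exact hx n k ⟨hk, hgt, hanc⟩ hxk
    have hk' : k / 2 ^ (n - m) < 2 ^ m := by
      rw [Nat.div_lt_iff_lt_mul (Nat.two_pow_pos _), ← pow_add, Nat.add_sub_cancel' hmn.le]
      exact hk
    exact hm.not_ge (ih m hmn _ hk' (dyadicIco_subset_ancestor hab hmn.le hxk))

theorem ae_le_of_forall_setAverage_dyadicIco_le (hab : a < b) (hf : IntegrableOn f (Icc a b)) :
    ∀ᵐ x, x ∈ Ico a b →
      (∀ n, ∀ k < 2 ^ n, x ∈ dyadicIco a b n k → ⨍ y in dyadicIco a b n k, f y ≤ t) →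
        f x ≤ t := by
  filter_upwards [ae_tendsto_setAverage_Icc (l := (atTop : Filter ℕ))
    (hf.integrable_indicator measurableSet_Icc).locallyIntegrable] with x hx hxJ hle
  choose k hk hxk using exists_mem_dyadicIco hab hxJ
  have hIco : ∀ n, Ico (a + k n * dyadicLength a b n)
      (a + k n * dyadicLength a b n + dyadicLength a b n) = dyadicIco a b n (k n) := by
    intro n
    rw [dyadicIco]
    congr 1
    ring
  have hcell : ∀ n, ⨍ y in Icc (a + k n * dyadicLength a b n)
      (a + k n * dyadicLength a b n + dyadicLength a b n), (Icc a b).indicator f y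
        = ⨍ y in dyadicIco a b n (k n), f y := by
    intro n
    rw [← setAverage_congr Ico_ae_eq_Icc, hIco]
    exact setAverage_congr_fun measurableSet_Ico
      (ae_of_all _ fun y hy => indicator_of_mem (dyadicIco_subset_Icc hab.le (hk n) hy) f)
  have hlim := hx (fun n => a + k n * dyadicLength a b n) (dyadicLength a b)
    (tendsto_dyadicLength hab) fun n => Ico_subset_Icc_self (by rw [hIco]; exact hxk n)
  rw [← indicator_of_mem (Ico_subset_Icc_self hxJ) f]
  exact le_of_tendsto hlim
    (Eventually.of_forall fun n => (hcell n).trans_le (hle n (k n) (hk n) (hxk n)))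

end Stopping

end CalderonZygmund

open CalderonZygmund

/-- Calderón–Zygmund decomposition on an interval `J = [a,b]`. -/
theorem calderon_zygmund_decomposition (a b : ℝ) (hab : a < b) (h : ℝ → ℝ)
    (hint : IntegrableOn h (Set.Icc a b))
    (havg : (∫ y in Set.Icc a b, |h y|) / (volume (Set.Icc a b)).toReal ≤ 1) :
    ∃ (E : Set ℝ) (K : ℕ → Set ℝ) (S : Set ℕ),
      MeasurableSet E ∧ E ⊆ Set.Icc a b ∧
      -- (i) E has at least half the measure of J
      (volume (Set.Icc a b)).toReal / 2 ≤ (volume E).toReal ∧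
      -- (ii) |h| ≤ 2 a.e. on E
      (∀ᵐ x ∂volume, x ∈ E → |h x| ≤ 2) ∧
      -- the J_i are pairwise disjoint subintervals of J
      (∀ i ∈ S, IsBddInterval (K i) ∧ K i ⊆ Set.Icc a b) ∧
      S.PairwiseDisjoint K ∧
      -- (iii) ⋃ J_i = J \ E up to measure zero
      volume (symmDiff (⋃ i ∈ S, K i) (Set.Icc a b \ E)) = 0 ∧
      -- (iv) the average of |h| over each J_i is at most 4
      (∀ i ∈ S, (∫ y in K i, |h y|) / (volume (K i)).toReal ≤ 4) := by
  set P := {p : ℕ × ℕ | IsStoppingCell (fun y => |h y|) 2 a b p.1 p.2}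
  set U := ⋃ p ∈ P, dyadicIco a b p.1 p.2
  have hUJ : U ⊆ Icc a b := iUnion₂_subset fun p hp => dyadicIco_subset_Icc hab.le hp.1
  have hUm : MeasurableSet U := .biUnion P.to_countable fun _ _ => measurableSet_Ico
  have hJ : ⨍ y in Icc a b, |h y| ≤ 2 := by
    rw [setAverage_eq_div]
    linarith
  have hU_reindex : ⋃ i ∈ Nat.unpair ⁻¹' P, dyadicIco a b i.unpair.1 i.unpair.2 = U := by
    rw [← biUnion_image (f := Nat.unpair) (g := fun p => dyadicIco a b p.1 p.2),
      image_preimage_eq _ Nat.surjective_unpair]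
  refine ⟨Icc a b \ U, fun i => dyadicIco a b i.unpair.1 i.unpair.2, Nat.unpair ⁻¹' P,
    measurableSet_Icc.diff hUm, sdiff_subset, ?_, ?_,
    fun i hi => ⟨isBddInterval_dyadicIco hab, dyadicIco_subset_Icc hab.le hi.1⟩,
    fun i hi j hj hij => pairwiseDisjoint_stoppingCells hab.le hi hj
      fun heq => hij (Nat.pairEquiv.symm.injective heq), ?_, fun i hi => ?_⟩
  · have hmeasure := mul_volume_stoppingUnion_le hab zero_le_two (fun y => abs_nonneg (h y))
      hint.abs
    rw [← measureReal_def, Real.volume_real_Icc_of_le hab.le, div_le_one (sub_pos.2 hab)] at havg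
    rw [← measureReal_def, ← measureReal_def, measureReal_sdiff hUJ hUm measure_Icc_lt_top.ne,
      Real.volume_real_Icc_of_le hab.le]
    linarith
  · filter_upwards [ae_le_of_forall_setAverage_dyadicIco_le (t := 2) hab hint.abs,
      measure_eq_zero_iff_ae_notMem.1 (measure_singleton b)] with x hx hxb hxE
    exact hx ⟨hxE.1.1, hxE.1.2.lt_of_ne hxb⟩ <| setAverage_dyadicIco_le_of_forall_notMem hab.le
      fun n k hnk hxnk => hxE.2 (mem_biUnion (x := (n, k)) hnk hxnk)
  · rw [hU_reindex, sdiff_sdiff_cancel_left hUJ, symmDiff_self]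
    exact measure_empty
  · rw [← setAverage_eq_div]
    linarith [hi.setAverage_le hab (fun y => abs_nonneg (h y)) hint.abs hJ]
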